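/- arXiv:1211.1419 — 4 statements merged into one kernel-verified Lean document; each statement's English description precedes it below -/
import Mathlib

section
/- Let V ⊂ ℝ² be open and suppose the restriction of F to V is a C¹ diffeomorphism onto an open set U ⊂ ℝ². Let m : ℝ → ℝ satisfy m' = α, and define Ψ : U → ℝ by Ψ(F(y₁, y₂)) = m(y₁) + y₂ for (y₁, y₂) ∈ V. Then ∇Ψ(F(y₁, y₂)) = (α(y₁), β(y₁)) for every (y₁, y₂) ∈ V; in particular |∇Ψ(x)| = 1 for every x ∈ U, and Ψ(x₁, 0) = m(x₁) whenever (x₁, 0) ∈ U with (x₁, 0) ∈ V. -/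
open Set

/-- The characteristic map `F(y₁, y₂) = (y₁ + y₂ α(y₁), y₂ β(y₁))` with
`β = √(1 - α²)`, used to integrate the eikonal equation `|∇Ψ| = 1` with
boundary data `Ψ(x₁, 0) = m(x₁)` by the method of characteristics. -/
noncomputable def Fchar (α : ℝ → ℝ) (y : ℝ × ℝ) : ℝ × ℝ :=
  (y.1 + y.2 * α y.1, y.2 * Real.sqrt (1 - α y.1 ^ 2))

/-!
Write `Ψ = H ∘ G` near `F y`, where `H(y₁, y₂) = m(y₁) + y₂` and `G` is the local inverse of `F`.
By the chain rule `DΨ(F y) = DH(y) ∘ DF(y)⁻¹`, so it suffices that the covector `(α, β)(y₁)`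
composed with `DF(y)` equals `DH(y) = (α(y₁), 1)`. Its second component is `α² + β² = 1`; its
first is `α + y₂ (α α' + β β')`, and `α α' + β β' = 0` because `(α, β)` is a unit vector.
-/

open Filter Topology ContinuousLinearMap

section LocalInverse

variable {𝕜 : Type*} [NontriviallyNormedField 𝕜]
  {E F G : Type*} [NormedAddCommGroup E] [NormedSpace 𝕜 E] [NormedAddCommGroup F] [NormedSpace 𝕜 F]
  [NormedAddCommGroup G] [NormedSpace 𝕜 G]

theorem hasFDerivAt_of_eventuallyEq_comp_localInverse {f : E → F} {g : F → E} {h : E → G}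
    {ψ : F → G} {y : E} {A : E →L[𝕜] F} {B : F →L[𝕜] E} {C : E →L[𝕜] G} {L : F →L[𝕜] G}
    (hgf : g (f y) = y) (hf : HasFDerivAt f A y) (hg : HasFDerivAt g B (f y))
    (hh : HasFDerivAt h C y) (hfg : f ∘ g =ᶠ[𝓝 (f y)] id) (hψ : ψ =ᶠ[𝓝 (f y)] h ∘ g)
    (hLA : L.comp A = C) :
    HasFDerivAt ψ L (f y) := by
  rw [← hgf] at hf hh
  have hAB : A.comp B = ContinuousLinearMap.id 𝕜 F :=
    ((hf.comp (f y) hg).congr_of_eventuallyEq hfg.symm).unique (hasFDerivAt_id (f y))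
  have hψ' : HasFDerivAt ψ (C.comp B) (f y) := (hh.comp (f y) hg).congr_of_eventuallyEq hψ
  rwa [← hLA, comp_assoc, hAB, comp_id] at hψ'

end LocalInverse

theorem HasDerivAt.sqrt_one_sub_sq {f : ℝ → ℝ} {f' x : ℝ} (hf : HasDerivAt f f' x)
    (hx : |f x| < 1) :
    HasDerivAt (fun t => √(1 - f t ^ 2)) (-(f x * f') / √(1 - f x ^ 2)) x := by
  have hpos : 0 < 1 - f x ^ 2 := sub_pos.2 ((sq_lt_one_iff_abs_lt_one _).2 hx)
  refine (((hf.pow 2).const_sub 1).sqrt hpos.ne').congr_deriv ?_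
  simp only [Pi.pow_apply]
  field_simp
  ring

/-- The Jacobian of `(y₁, y₂) ↦ (y₁ + y₂ a(y₁), y₂ b(y₁))` at a point with `y₂ = t`, in terms of
the values `a, a', b, b'` of `a, b` and their derivatives at `y₁`. -/
noncomputable def charJacobian (a a' b b' t : ℝ) : ℝ × ℝ →L[ℝ] ℝ × ℝ :=
  (fst ℝ ℝ ℝ + (t • a' • fst ℝ ℝ ℝ + a • snd ℝ ℝ ℝ)).prod (t • b' • fst ℝ ℝ ℝ + b • snd ℝ ℝ ℝ)

theorem hasFDerivAt_Fchar {α : ℝ → ℝ} {α' β' : ℝ} {y : ℝ × ℝ} (hα : HasDerivAt α α' y.1)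
    (hβ : HasDerivAt (fun s => √(1 - α s ^ 2)) β' y.1) :
    HasFDerivAt (Fchar α) (charJacobian (α y.1) α' (√(1 - α y.1 ^ 2)) β' y.2) y := by
  have h₁ : HasFDerivAt (fun z : ℝ × ℝ => z.1 + z.2 * α z.1)
      (fst ℝ ℝ ℝ + (y.2 • α' • fst ℝ ℝ ℝ + α y.1 • snd ℝ ℝ ℝ)) y :=
    hasFDerivAt_fst.add (hasFDerivAt_snd.mul (hα.comp_hasFDerivAt y hasFDerivAt_fst))
  have h₂ : HasFDerivAt (fun z : ℝ × ℝ => z.2 * √(1 - α z.1 ^ 2))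
      (y.2 • β' • fst ℝ ℝ ℝ + √(1 - α y.1 ^ 2) • snd ℝ ℝ ℝ) y :=
    hasFDerivAt_snd.mul (hβ.comp_hasFDerivAt y hasFDerivAt_fst)
  exact h₁.prodMk h₂

theorem comp_charJacobian_of_unit {a a' b b' t : ℝ} (hunit : a ^ 2 + b ^ 2 = 1)
    (horth : a * a' + b * b' = 0) :
    (a • fst ℝ ℝ ℝ + b • snd ℝ ℝ ℝ).comp (charJacobian a a' b b' t) = a • fst ℝ ℝ ℝ + snd ℝ ℝ ℝ := by
  refine ContinuousLinearMap.ext fun v => ?_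
  simp only [charJacobian, add_comp, smul_comp, fst_comp_prod, snd_comp_prod, add_apply,
    smul_apply, coe_fst', coe_snd', smul_eq_mul]
  linear_combination t * v.1 * horth + v.2 * hunit

theorem eikonal_gradient_along_characteristics_general
    (α : ℝ → ℝ) (hα : ContDiff ℝ 1 α) (hα1 : ∀ s, |α s| < 1)
    (V U : Set (ℝ × ℝ)) (hU : IsOpen U)
    (hFV : Fchar α '' V = U)
    (G : ℝ × ℝ → ℝ × ℝ) (hG : ContDiffOn ℝ 1 G U)
    (hGF : ∀ y ∈ V, G (Fchar α y) = y)
    (m : ℝ → ℝ) (hm : ∀ s, HasDerivAt m (α s) s)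
    (Ψ : ℝ × ℝ → ℝ) (hΨ : ∀ y ∈ V, Ψ (Fchar α y) = m y.1 + y.2) :
    (∀ y ∈ V, HasFDerivAt Ψ
        ((α y.1) • ContinuousLinearMap.fst ℝ ℝ ℝ
          + (Real.sqrt (1 - α y.1 ^ 2)) • ContinuousLinearMap.snd ℝ ℝ ℝ) (Fchar α y))
    ∧ (∀ x ∈ U, (fderiv ℝ Ψ x (1, 0)) ^ 2 + (fderiv ℝ Ψ x (0, 1)) ^ 2 = 1)
    ∧ (∀ x₁ : ℝ, ((x₁, (0 : ℝ)) ∈ V) → Ψ (x₁, 0) = m x₁) := by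
  have hpos (s : ℝ) : 0 < 1 - α s ^ 2 := sub_pos.2 ((sq_lt_one_iff_abs_lt_one _).2 (hα1 s))
  have hβsq (s : ℝ) : √(1 - α s ^ 2) ^ 2 = 1 - α s ^ 2 := Real.sq_sqrt (hpos s).le
  have hFG : EqOn (Fchar α ∘ G) id U := by
    rw [← hFV]
    exact LeftInvOn.rightInvOn_image hGF
  have hΨG : EqOn Ψ ((fun p : ℝ × ℝ => m p.1 + p.2) ∘ G) U := by
    rw [← hFV]
    rintro _ ⟨y, hy, rfl⟩
    simp [hΨ y hy, hGF y hy]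
  have hgrad : ∀ y ∈ V, HasFDerivAt Ψ
      ((α y.1) • fst ℝ ℝ ℝ + (√(1 - α y.1 ^ 2)) • snd ℝ ℝ ℝ) (Fchar α y) := by
    intro y hy
    have hxU : Fchar α y ∈ U := hFV ▸ mem_image_of_mem _ hy
    have hα' := (hα.differentiable one_ne_zero y.1).hasDerivAt
    refine hasFDerivAt_of_eventuallyEq_comp_localInverse (hGF y hy)
      (hasFDerivAt_Fchar hα' (hα'.sqrt_one_sub_sq (hα1 _)))
      ((hG.differentiableOn one_ne_zero _ hxU).differentiableAt (hU.mem_nhds hxU)).hasFDerivAt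
      (((hm y.1).comp_hasFDerivAt y hasFDerivAt_fst).add hasFDerivAt_snd)
      (hFG.eventuallyEq_of_mem (hU.mem_nhds hxU)) (hΨG.eventuallyEq_of_mem (hU.mem_nhds hxU))
      (comp_charJacobian_of_unit ?_ ?_)
    · rw [hβsq]; ring
    · field_simp [(Real.sqrt_pos.2 (hpos y.1)).ne']
      ring
  refine ⟨hgrad, ?_, fun x₁ hx₁ => by simpa [Fchar] using hΨ (x₁, 0) hx₁⟩
  rw [← hFV]
  rintro _ ⟨y, hy, rfl⟩
  simp [(hgrad y hy).fderiv, hβsq]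

/-- **Gradient of the eikonal solution along characteristics.**
If `F = Fchar α` restricted to an open set `V` is a `C¹` diffeomorphism onto an open
set `U` (with `C¹` inverse `G`), `m' = α`, and `Ψ` is defined on `U` by
`Ψ(F(y₁, y₂)) = m(y₁) + y₂`, then `∇Ψ(F(y₁, y₂)) = (α(y₁), β(y₁))` on `V`;
in particular `|∇Ψ| = 1` on `U`, and `Ψ(x₁, 0) = m(x₁)` whenever `(x₁, 0) ∈ V`. -/
theorem eikonal_gradient_along_characteristics
    (α : ℝ → ℝ) (hα : ContDiff ℝ 1 α) (hα1 : ∀ s, |α s| < 1)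
    (V U : Set (ℝ × ℝ)) (hV : IsOpen V) (hU : IsOpen U)
    (hFV : Fchar α '' V = U) (hFinj : InjOn (Fchar α) V)
    (G : ℝ × ℝ → ℝ × ℝ) (hG : ContDiffOn ℝ 1 G U)
    (hGF : ∀ y ∈ V, G (Fchar α y) = y)
    (m : ℝ → ℝ) (hm : ∀ s, HasDerivAt m (α s) s)
    (Ψ : ℝ × ℝ → ℝ) (hΨ : ∀ y ∈ V, Ψ (Fchar α y) = m y.1 + y.2) :
    (∀ y ∈ V, HasFDerivAt Ψ
        ((α y.1) • ContinuousLinearMap.fst ℝ ℝ ℝ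
          + (Real.sqrt (1 - α y.1 ^ 2)) • ContinuousLinearMap.snd ℝ ℝ ℝ) (Fchar α y))
    ∧ (∀ x ∈ U, (fderiv ℝ Ψ x (1, 0)) ^ 2 + (fderiv ℝ Ψ x (0, 1)) ^ 2 = 1)
    ∧ (∀ x₁ : ℝ, ((x₁, (0 : ℝ)) ∈ V) → Ψ (x₁, 0) = m x₁) :=
  eikonal_gradient_along_characteristics_general α hα hα1 V U hU hFV G hG hGF m hm Ψ hΨ
end

section
/- For every K > 0 there exists ε > 0 with the following property: for every α : ℝ → ℝ of class C² with support contained in (−1, 1), α(0) = 0, and sup(|α| + |α'| + |α''|) ≤ ε, there exists δ > 0 such that the restriction of F to the open rectangle (−δ, δ) × (−δ, K + δ) is injective and has invertible derivative at every point; consequently F restricts to a C¹ diffeomorphism from this rectangle onto an open subset of ℝ² containing the segment {0} × [0, K]. -/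
/-!
For `ε` small in terms of `K`, the Jacobian of `F` stays within `1/2` of the identity in operator
norm on the rectangle `(-1, 1) × (-1, K + 1)`. By the mean value inequality `F - id` is then
`1/2`-Lipschitz there, so `F` is injective with open image, its Jacobian is invertible by the
Neumann series, and the inverse function theorem makes the inverse `C¹`. Since `α 0 = 0`, `F` fixes
the segment `{0} × [0, K]` pointwise.
-/

open Set

open scoped NNReal

theorem OpenPartialHomeomorph.contDiffOn_symm {𝕜 : Type*} [NontriviallyNormedField 𝕜]
    {E F : Type*} [NormedAddCommGroup E] [NormedSpace 𝕜 E] [CompleteSpace E]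
    [NormedAddCommGroup F] [NormedSpace 𝕜 F] {n : WithTop ℕ∞} (e : OpenPartialHomeomorph E F)
    (he' : ∀ x ∈ e.source, ∃ A : E ≃L[𝕜] F, HasFDerivAt e (A : E →L[𝕜] F) x)
    (he : ContDiffOn 𝕜 n e e.source) : ContDiffOn 𝕜 n e.symm e.target := by
  intro y hy
  have hx : e.symm y ∈ e.source := e.map_target hy
  obtain ⟨A, hA⟩ := he' _ hx
  exact (e.contDiffAt_symm hy hA ((he _ hx).contDiffAt (e.open_source.mem_nhds hx)))
    |>.contDiffWithinAt

theorem exists_continuousLinearEquiv_of_norm_sub_one_lt_one {𝕜 E : Type*}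
    [NontriviallyNormedField 𝕜] [NormedAddCommGroup E] [NormedSpace 𝕜 E] [CompleteSpace E]
    {T : E →L[𝕜] E} (hT : ‖T - 1‖ < 1) : ∃ A : E ≃L[𝕜] E, (A : E →L[𝕜] E) = T := by
  rw [← norm_neg, neg_sub] at hT
  refine ⟨ContinuousLinearEquiv.unitsEquiv 𝕜 E (Units.oneSub _ hT), ?_⟩
  ext x
  simp [ContinuousLinearEquiv.unitsEquiv_apply, Units.val_oneSub]

section PerturbationOfIdentity

variable {E : Type*} [NormedAddCommGroup E] [NormedSpace ℝ E]

theorem approximatesLinearOn_one_of_norm_hasFDerivAt_sub_one_le {f : E → E}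
    {f' : E → E →L[ℝ] E} {s : Set E} {c : ℝ≥0} (hs : Convex ℝ s)
    (hf : ∀ x ∈ s, HasFDerivAt f (f' x) x) (hf' : ∀ x ∈ s, ‖f' x - 1‖ ≤ c) :
    ApproximatesLinearOn f (1 : E →L[ℝ] E) s c := by
  refine LipschitzOnWith.approximatesLinearOn ?_
  refine hs.lipschitzOnWith_of_nnnorm_hasFDerivWithin_le
    (fun x hx => ((hf x hx).sub (1 : E →L[ℝ] E).hasFDerivAt).hasFDerivWithinAt) fun x hx => ?_
  rw [← NNReal.coe_le_coe, coe_nnnorm]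
  exact hf' x hx

theorem injOn_and_isOpen_image_and_contDiffOn_leftInverse_of_norm_sub_one_le
    [CompleteSpace E] {n : WithTop ℕ∞} {f : E → E} {f' : E → E →L[ℝ] E} {s : Set E} {c : ℝ≥0}
    (hs : IsOpen s) (hsc : Convex ℝ s) (hf : ∀ x ∈ s, HasFDerivAt f (f' x) x)
    (hf' : ∀ x ∈ s, ‖f' x - 1‖ ≤ c) (hc : c < 1) (hfn : ContDiffOn ℝ n f s) :
    InjOn f s ∧ (∀ x ∈ s, ∃ A : E ≃L[ℝ] E, HasFDerivAt f (A : E →L[ℝ] E) x) ∧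
      IsOpen (f '' s) ∧ ∃ g : E → E, ContDiffOn ℝ n g (f '' s) ∧ ∀ x ∈ s, g (f x) = x := by
  have happrox : ApproximatesLinearOn f
      ((ContinuousLinearEquiv.refl ℝ E : E ≃L[ℝ] E) : E →L[ℝ] E) s c :=
    approximatesLinearOn_one_of_norm_hasFDerivAt_sub_one_le hsc hf hf'
  have hcN : Subsingleton E ∨
      c < ‖((ContinuousLinearEquiv.refl ℝ E).symm : E →L[ℝ] E)‖₊⁻¹ := by
    rcases subsingleton_or_nontrivial E with hE | hE
    · exact Or.inl hE
    · right
      simpa [ContinuousLinearEquiv.coe_refl, ContinuousLinearMap.nnnorm_id] using hc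
  have hinv : ∀ x ∈ s, ∃ A : E ≃L[ℝ] E, HasFDerivAt f (A : E →L[ℝ] E) x := fun x hx => by
    obtain ⟨A, hA⟩ := exists_continuousLinearEquiv_of_norm_sub_one_lt_one
      ((hf' x hx).trans_lt hc)
    exact ⟨A, hA ▸ hf x hx⟩
  let e := happrox.toOpenPartialHomeomorph f s hcN hs
  exact ⟨happrox.injOn hcN, hinv, e.open_target, e.symm, e.contDiffOn_symm hinv hfn,
    fun x hx => e.left_inv hx⟩

end PerturbationOfIdentity

noncomputable def mat2 (a b c d : ℝ) : ℝ × ℝ →L[ℝ] ℝ × ℝ :=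
  (a • ContinuousLinearMap.fst ℝ ℝ ℝ + b • ContinuousLinearMap.snd ℝ ℝ ℝ).prod
    (c • ContinuousLinearMap.fst ℝ ℝ ℝ + d • ContinuousLinearMap.snd ℝ ℝ ℝ)

@[simp]
theorem mat2_apply (a b c d : ℝ) (h : ℝ × ℝ) :
    mat2 a b c d h = (a * h.1 + b * h.2, c * h.1 + d * h.2) := rfl

theorem mat2_sub_one (a b c d : ℝ) : mat2 a b c d - 1 = mat2 (a - 1) b c (d - 1) := by
  refine ContinuousLinearMap.ext fun h => Prod.ext ?_ ?_ <;> simp <;> ring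

theorem norm_mat2_le {a b c d m : ℝ} (h₁ : |a| + |b| ≤ m) (h₂ : |c| + |d| ≤ m) :
    ‖mat2 a b c d‖ ≤ m := by
  have hm : 0 ≤ m := (add_nonneg (abs_nonneg a) (abs_nonneg b)).trans h₁
  have row {p q : ℝ} (hpq : |p| + |q| ≤ m) (h : ℝ × ℝ) : |p * h.1 + q * h.2| ≤ m * ‖h‖ :=
    calc |p * h.1 + q * h.2| ≤ |p| * |h.1| + |q| * |h.2| := by
          simpa only [abs_mul] using abs_add_le (p * h.1) (q * h.2)
      _ ≤ |p| * ‖h‖ + |q| * ‖h‖ := by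
          gcongr
          exacts [norm_fst_le h, norm_snd_le h]
      _ ≤ m * ‖h‖ := by rw [← add_mul]; gcongr
  refine ContinuousLinearMap.opNorm_le_bound _ hm fun h => ?_
  rw [mat2_apply, Prod.norm_def]
  exact max_le (row h₁ h) (row h₂ h)

noncomputable def FcharDeriv (α : ℝ → ℝ) (y : ℝ × ℝ) : ℝ × ℝ →L[ℝ] ℝ × ℝ :=
  mat2 (1 + y.2 * deriv α y.1) (α y.1)
    (-(y.2 * (α y.1 * deriv α y.1) / √(1 - α y.1 ^ 2))) (√(1 - α y.1 ^ 2))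

theorem hasFDerivAt_Fchar_s5 {α : ℝ → ℝ} {y : ℝ × ℝ} (hα : DifferentiableAt ℝ α y.1)
    (hy : α y.1 ^ 2 < 1) : HasFDerivAt (Fchar α) (FcharDeriv α y) y := by
  have hβ : HasDerivAt (fun t => √(1 - α t ^ 2))
      (-(2 * α y.1 * deriv α y.1) / (2 * √(1 - α y.1 ^ 2))) y.1 := by
    refine HasDerivAt.sqrt ?_ (sub_pos.2 hy).ne'
    simpa using (hα.hasDerivAt.pow 2).const_sub 1
  have hfst : HasFDerivAt (Prod.fst : ℝ × ℝ → ℝ) (ContinuousLinearMap.fst ℝ ℝ ℝ) y :=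
    hasFDerivAt_fst
  have hsnd : HasFDerivAt (Prod.snd : ℝ × ℝ → ℝ) (ContinuousLinearMap.snd ℝ ℝ ℝ) y :=
    hasFDerivAt_snd
  have hF := (hfst.add (hsnd.mul (hα.hasDerivAt.comp_hasFDerivAt y hfst))).prodMk
    (hsnd.mul (hβ.comp_hasFDerivAt y hfst))
  refine hF.congr_fderiv (ContinuousLinearMap.ext fun h => Prod.ext ?_ ?_)
  · simp [FcharDeriv]
    ring
  · simp [FcharDeriv]
    field_simp

theorem contDiff_Fchar {α : ℝ → ℝ} {n : WithTop ℕ∞} (hα : ContDiff ℝ n α)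
    (hα₁ : ∀ t, α t ^ 2 < 1) : ContDiff ℝ n (Fchar α) :=
  (contDiff_fst.add (contDiff_snd.mul (hα.comp contDiff_fst))).prodMk
    (contDiff_snd.mul (ContDiff.sqrt (contDiff_const.sub ((hα.comp contDiff_fst).pow 2))
      fun y => (sub_pos.2 (hα₁ y.1)).ne'))

theorem Fchar_zero_mk {α : ℝ → ℝ} (hα : α 0 = 0) (t : ℝ) : Fchar α (0, t) = (0, t) := by
  simp [Fchar, hα]

theorem norm_FcharDeriv_sub_one_le {α : ℝ → ℝ} {y : ℝ × ℝ} {ε R : ℝ} (hα : |α y.1| ≤ ε)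
    (hα' : |deriv α y.1| ≤ ε) (hy : |y.2| ≤ R) (hεR : (R + 1) * ε ≤ 1 / 4) :
    ‖FcharDeriv α y - 1‖ ≤ 1 / 2 := by
  rw [FcharDeriv, mat2_sub_one, add_sub_cancel_left]
  set β := √(1 - α y.1 ^ 2)
  have hR : 0 ≤ R := (abs_nonneg _).trans hy
  have hε : 0 ≤ ε := (abs_nonneg _).trans hα
  have hα_sq : α y.1 ^ 2 ≤ ε ^ 2 := sq_le_sq' (abs_le.1 hα).1 (abs_le.1 hα).2
  have hβ_sq : β ^ 2 = 1 - α y.1 ^ 2 := Real.sq_sqrt (by nlinarith)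
  have hβ_le : β ≤ 1 := Real.sqrt_le_one.2 (by nlinarith)
  have hβ_ge : 1 / 2 ≤ β := (Real.le_sqrt' (by norm_num)).2 (by nlinarith)
  apply norm_mat2_le
  · calc |y.2 * deriv α y.1| + |α y.1| ≤ R * ε + ε := by
          rw [abs_mul]; gcongr
      _ ≤ 1 / 2 := by nlinarith
  · have h₁ : |-(y.2 * (α y.1 * deriv α y.1) / β)| ≤ 2 * R * ε ^ 2 := by
      rw [abs_neg, abs_div, abs_of_pos (by linarith : 0 < β), div_le_iff₀ (by linarith),
        abs_mul, abs_mul]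
      calc |y.2| * (|α y.1| * |deriv α y.1|) ≤ R * (ε * ε) := by gcongr
        _ ≤ 2 * R * ε ^ 2 * β := by
          nlinarith [mul_le_mul_of_nonneg_left hβ_ge (by positivity : 0 ≤ 2 * R * ε ^ 2)]
    -- `1 - β ≤ (1 - β) (1 + β) = α²`
    have h₂ : |β - 1| ≤ ε ^ 2 := by
      rw [abs_sub_comm, abs_of_nonneg (by linarith)]
      nlinarith
    nlinarith

/-- **Local diffeomorphism property of the characteristic map.**
For every `K > 0` there is `ε > 0` such that for every `C²` function `α` supported in
`(-1, 1)` with `α(0) = 0` and `sup(|α| + |α'| + |α''|) ≤ ε`, there is `δ > 0` such that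
`F = Fchar α` is injective with invertible derivative on the open rectangle
`(-δ, δ) × (-δ, K + δ)`; consequently `F` restricts to a `C¹` diffeomorphism from this
rectangle onto an open set containing the segment `{0} × [0, K]`. -/
theorem Fchar_local_diffeomorphism :
    ∀ K : ℝ, 0 < K → ∃ ε > (0 : ℝ), ∀ α : ℝ → ℝ,
      ContDiff ℝ 2 α → Function.support α ⊆ Ioo (-1 : ℝ) 1 → α 0 = 0 →
      (∀ s : ℝ, |α s| + |deriv α s| + |deriv (deriv α) s| ≤ ε) →
      ∃ δ > (0 : ℝ),
        InjOn (Fchar α) (Ioo (-δ) δ ×ˢ Ioo (-δ) (K + δ))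
        ∧ (∀ y ∈ Ioo (-δ) δ ×ˢ Ioo (-δ) (K + δ),
            ∃ A : (ℝ × ℝ) ≃L[ℝ] ℝ × ℝ,
              HasFDerivAt (Fchar α) (A : (ℝ × ℝ) →L[ℝ] ℝ × ℝ) y)
        ∧ IsOpen (Fchar α '' (Ioo (-δ) δ ×ˢ Ioo (-δ) (K + δ)))
        ∧ ({(0 : ℝ)} : Set ℝ) ×ˢ Icc (0 : ℝ) K ⊆ Fchar α '' (Ioo (-δ) δ ×ˢ Ioo (-δ) (K + δ))
        ∧ ∃ G : ℝ × ℝ → ℝ × ℝ,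
            ContDiffOn ℝ 1 G (Fchar α '' (Ioo (-δ) δ ×ˢ Ioo (-δ) (K + δ)))
            ∧ ∀ y ∈ Ioo (-δ) δ ×ˢ Ioo (-δ) (K + δ), G (Fchar α y) = y := by
  intro K hK
  refine ⟨1 / (4 * (K + 2)), by positivity, fun α hα _ hα0 hbound => ?_⟩
  have hsmall (t : ℝ) : |α t| ≤ 1 / (4 * (K + 2)) ∧ |deriv α t| ≤ 1 / (4 * (K + 2)) := by
    have := hbound t
    constructor <;> linarith [abs_nonneg (α t), abs_nonneg (deriv α t),
      abs_nonneg (deriv (deriv α) t)]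
  have hε_lt_one : 1 / (4 * (K + 2)) < 1 := by rw [div_lt_one (by positivity)]; linarith
  have hα_sq (t : ℝ) : α t ^ 2 < 1 :=
    (sq_lt_one_iff_abs_lt_one _).2 ((hsmall t).1.trans_lt hε_lt_one)
  have hnear : ∀ y ∈ Ioo (-1 : ℝ) 1 ×ˢ Ioo (-1) (K + 1),
      ‖FcharDeriv α y - 1‖ ≤ ((1 / 2 : ℝ≥0) : ℝ) := fun y hy => by
    have hy₂ : |y.2| ≤ K + 1 := abs_le.2 ⟨by linarith [hy.2.1], hy.2.2.le⟩
    exact_mod_cast norm_FcharDeriv_sub_one_le (hsmall y.1).1 (hsmall y.1).2 hy₂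
      (le_of_eq (by field_simp; ring))
  obtain ⟨hinj, hinv, hopen, G, hG, hGF⟩ :=
    injOn_and_isOpen_image_and_contDiffOn_leftInverse_of_norm_sub_one_le
      (isOpen_Ioo.prod isOpen_Ioo) ((convex_Ioo _ _).prod (convex_Ioo _ _))
      (fun y _ => hasFDerivAt_Fchar_s5 (hα.differentiable (by norm_num) y.1) (hα_sq y.1))
      hnear (by norm_num) (contDiff_Fchar (n := 1) (hα.of_le (by norm_num)) hα_sq).contDiffOn
  refine ⟨1, one_pos, hinj, hinv, hopen, ?_, G, hG, hGF⟩
  rintro ⟨_, t⟩ ⟨rfl, ht₀, htK⟩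
  exact ⟨(0, t), ⟨by norm_num, by linarith, by linarith⟩, Fchar_zero_mk hα0 t⟩
end

section
/- Let V ⊂ ℝ² be open and suppose the restriction of F to V is a C¹ diffeomorphism onto an open set U ⊂ ℝ². Let m : ℝ → ℝ satisfy m' = α and define Ψ : U → ℝ by Ψ(F(y₁, y₂)) = m(y₁) + y₂. Let r : ℝ → ℝ be of class C¹ and define a : U → ℝ by a(F(y₁, y₂)) = r(y₁). Then ⟨∇Ψ(x), ∇a(x)⟩ = 0 for every x ∈ U, i.e. any C¹ function that is constant along the characteristic curves t ↦ F(y₁, t) is annihilated by the directional derivative along ∇Ψ. -/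
open Set

/-!
Along the characteristic `t ↦ F(y₁, t)`, whose unit tangent is `u = (α, β)(y₁)`, the function
`Ψ` grows at unit rate and `a` is constant, so `∇Ψ · u = 1 = u · u` and `∇a · u = 0`. Along
`s ↦ F(s, y₂)` the tangent `w` satisfies `u · w = α(y₁)` (because `α α' + β β' = 0`), which is
also the rate of change `m'(y₁)` of `Ψ`. As `G` inverts `F`, the vectors `u` and `w` span the
plane, hence `∇Ψ = u` and `⟨∇Ψ, ∇a⟩ = ∇a · u = 0`.
-/

open Filter Topology

noncomputable def charDir (α : ℝ → ℝ) (s : ℝ) : ℝ × ℝ :=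
  (α s, √(1 - α s ^ 2))

def dotL (u : ℝ × ℝ) : ℝ × ℝ →L[ℝ] ℝ :=
  u.1 • ContinuousLinearMap.fst ℝ ℝ ℝ + u.2 • ContinuousLinearMap.snd ℝ ℝ ℝ

@[simp]
lemma dotL_apply (u v : ℝ × ℝ) : dotL u v = u.1 * v.1 + u.2 * v.2 := rfl

lemma ContinuousLinearMap.apply_eq_fst_smul_add_snd_smul {E : Type*} [NormedAddCommGroup E]
    [NormedSpace ℝ E] (T : ℝ × ℝ →L[ℝ] E) (v : ℝ × ℝ) :
    T v = v.1 • T (1, 0) + v.2 • T (0, 1) := by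
  rw [← map_smul, ← map_smul, ← map_add]
  congr 1
  ext <;> simp

lemma LinearMap.ext_of_linearIndependent_pair {K E F : Type*} [Field K] [AddCommGroup E]
    [Module K E] [AddCommGroup F] [Module K F] (hE : Module.finrank K E = 2) {u w : E}
    (hind : LinearIndependent K ![u, w]) {P Q : E →ₗ[K] F} (hu : P u = Q u) (hw : P w = Q w) :
    P = Q := by
  let b := basisOfLinearIndependentOfCardEqFinrank hind (by simp [hE])
  refine b.ext fun i => ?_
  fin_cases i <;> simpa [b]

lemma fderiv_apply_eq_of_eventually_comp_eq {E F : Type*} [NormedAddCommGroup E]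
    [NormedSpace ℝ E] [NormedAddCommGroup F] [NormedSpace ℝ F] {f : E → F} {γ : ℝ → E}
    {g : ℝ → F} {x v : E} {w : F} {t : ℝ} (hγ : HasDerivAt γ v t) (hγt : γ t = x)
    (hf : DifferentiableAt ℝ f x) (hg : HasDerivAt g w t) (hfγ : ∀ᶠ s in 𝓝 t, f (γ s) = g s) :
    fderiv ℝ f x v = w := by
  subst hγt
  exact (hf.hasFDerivAt.comp_hasDerivAt t hγ).unique (hg.congr_of_eventuallyEq hfγ)

lemma fderiv_apply_eq_zero_of_eventually_comp_eq_const {E F : Type*} [NormedAddCommGroup E]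
    [NormedSpace ℝ E] [NormedAddCommGroup F] [NormedSpace ℝ F] {f : E → F} {γ : ℝ → E}
    {x v : E} {t : ℝ} {c : F} (hγ : HasDerivAt γ v t) (hγt : γ t = x)
    (hfγ : ∀ᶠ s in 𝓝 t, f (γ s) = c) : fderiv ℝ f x v = 0 := by
  by_cases hf : DifferentiableAt ℝ f x
  · exact fderiv_apply_eq_of_eventually_comp_eq hγ hγt hf (hasDerivAt_const t c) hfγ
  · simp [fderiv_zero_of_not_differentiableAt hf]

lemma eventuallyEq_comp_of_leftInvOn {X Y Z : Type*} [TopologicalSpace Y] {F : X → Y}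
    {G : Y → X} {V : Set X} {f : Y → Z} {g : X → Z} (hGF : ∀ z ∈ V, G (F z) = z)
    (hf : ∀ z ∈ V, f (F z) = g z) {x : Y} (hx : F '' V ∈ 𝓝 x) : f =ᶠ[𝓝 x] g ∘ G := by
  filter_upwards [hx]
  rintro _ ⟨z, hz, rfl⟩
  simp [hGF z hz, hf z hz]

lemma eventually_mk_left_mem_nhds {X Y : Type*} [TopologicalSpace X] [TopologicalSpace Y]
    {V : Set (X × Y)} {y : X × Y} (hV : V ∈ 𝓝 y) : ∀ᶠ t in 𝓝 y.2, (y.1, t) ∈ V :=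
  (tendsto_const_nhds.prodMk_nhds tendsto_id).eventually hV

lemma eventually_mk_right_mem_nhds {X Y : Type*} [TopologicalSpace X] [TopologicalSpace Y]
    {V : Set (X × Y)} {y : X × Y} (hV : V ∈ 𝓝 y) : ∀ᶠ s in 𝓝 y.1, (s, y.2) ∈ V :=
  (tendsto_id.prodMk_nhds tendsto_const_nhds).eventually hV

lemma one_sub_sq_pos_of_abs_lt_one {s : ℝ} (hs : |s| < 1) : 0 < 1 - s ^ 2 :=
  sub_pos.2 ((sq_lt_one_iff_abs_lt_one s).2 hs)

lemma dotL_charDir_self {α : ℝ → ℝ} {s : ℝ} (hα1 : |α s| < 1) :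
    dotL (charDir α s) (charDir α s) = 1 := by
  simp [charDir, ← sq, Real.sq_sqrt (one_sub_sq_pos_of_abs_lt_one hα1).le]

lemma hasDerivAt_Fchar_vertical (α : ℝ → ℝ) (y : ℝ × ℝ) :
    HasDerivAt (fun t => Fchar α (y.1, t)) (charDir α y.1) y.2 := by
  convert (((hasDerivAt_id' y.2).mul_const (α y.1)).const_add y.1).prodMk
    ((hasDerivAt_id' y.2).mul_const √(1 - α y.1 ^ 2)) using 1
  · rfl
  · simp [charDir]

lemma exists_hasDerivAt_Fchar_horizontal {α : ℝ → ℝ} {s α' : ℝ} (hα : HasDerivAt α α' s)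
    (hα1 : |α s| < 1) (t : ℝ) :
    ∃ w, HasDerivAt (fun s => Fchar α (s, t)) w s ∧ dotL (charDir α s) w = α s := by
  have hβ : 0 < 1 - α s ^ 2 := one_sub_sq_pos_of_abs_lt_one hα1
  have hβd : HasDerivAt (fun s => √(1 - α s ^ 2)) _ s := ((hα.pow 2).const_sub 1).sqrt hβ.ne'
  refine ⟨_, ((hasDerivAt_id' s).add (hα.const_mul t)).prodMk (hβd.const_mul t), ?_⟩
  have hsqrt : √(1 - α s ^ 2) ≠ 0 := (Real.sqrt_pos.mpr hβ).ne'
  simp only [dotL_apply, charDir, Pi.pow_apply]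
  field_simp
  ring

lemma fderiv_eq_dotL_charDir {α m : ℝ → ℝ} {Ψ : ℝ × ℝ → ℝ} {G : ℝ × ℝ → ℝ × ℝ}
    {V : Set (ℝ × ℝ)} {y : ℝ × ℝ} (hα : DifferentiableAt ℝ α y.1) (hα1 : |α y.1| < 1)
    (hV : V ∈ 𝓝 y) (hGF : ∀ z ∈ V, G (Fchar α z) = z) (hG : DifferentiableAt ℝ G (Fchar α y))
    (hm : HasDerivAt m (α y.1) y.1) (hΨ : ∀ z ∈ V, Ψ (Fchar α z) = m z.1 + z.2)
    (hΨd : DifferentiableAt ℝ Ψ (Fchar α y)) :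
    fderiv ℝ Ψ (Fchar α y) = dotL (charDir α y.1) := by
  obtain ⟨w, hw, hdot⟩ := exists_hasDerivAt_Fchar_horizontal hα.hasDerivAt hα1 y.2
  have hu := hasDerivAt_Fchar_vertical α y
  have hvert := eventually_mk_left_mem_nhds hV
  have hhor := eventually_mk_right_mem_nhds hV
  have hΨu : fderiv ℝ Ψ (Fchar α y) (charDir α y.1) = 1 :=
    fderiv_apply_eq_of_eventually_comp_eq hu rfl hΨd ((hasDerivAt_id' y.2).const_add (m y.1))
      (hvert.mono fun t ht => hΨ _ ht)
  have hΨw : fderiv ℝ Ψ (Fchar α y) w = α y.1 :=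
    fderiv_apply_eq_of_eventually_comp_eq hw rfl hΨd (hm.add_const y.2)
      (hhor.mono fun s hs => hΨ _ hs)
  have hGu : fderiv ℝ G (Fchar α y) (charDir α y.1) = (0, 1) :=
    fderiv_apply_eq_of_eventually_comp_eq hu rfl hG
      ((hasDerivAt_const y.2 y.1).prodMk (hasDerivAt_id' y.2)) (hvert.mono fun t ht => hGF _ ht)
  have hGw : fderiv ℝ G (Fchar α y) w = (1, 0) :=
    fderiv_apply_eq_of_eventually_comp_eq hw rfl hG
      ((hasDerivAt_id' y.1).prodMk (hasDerivAt_const y.1 y.2)) (hhor.mono fun s hs => hGF _ hs)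
  have hind : LinearIndependent ℝ ![charDir α y.1, w] := by
    refine .of_comp (fderiv ℝ G (Fchar α y) : ℝ × ℝ →ₗ[ℝ] ℝ × ℝ) ?_
    have himage : ⇑(fderiv ℝ G (Fchar α y) : ℝ × ℝ →ₗ[ℝ] ℝ × ℝ) ∘ ![charDir α y.1, w] =
        ![(0, 1), (1, 0)] := by
      ext i : 1
      fin_cases i <;> simp [hGu, hGw]
    rw [himage, LinearIndependent.pair_iff]
    intro s t hst
    simpa [Prod.ext_iff, and_comm] using hst
  refine ContinuousLinearMap.coe_injective
    (LinearMap.ext_of_linearIndependent_pair (by simp) hind ?_ ?_)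
  · simpa [dotL_charDir_self hα1] using hΨu
  · simpa [hdot] using hΨw

theorem transport_orthogonality_general
    (α : ℝ → ℝ) (hα : ContDiff ℝ 1 α) (hα1 : ∀ s, |α s| < 1)
    (V U : Set (ℝ × ℝ)) (hV : IsOpen V) (hU : IsOpen U)
    (hFV : Fchar α '' V = U)
    (G : ℝ × ℝ → ℝ × ℝ) (hG : ContDiffOn ℝ 1 G U)
    (hGF : ∀ y ∈ V, G (Fchar α y) = y)
    (m : ℝ → ℝ) (hm : ∀ s, HasDerivAt m (α s) s)
    (Ψ : ℝ × ℝ → ℝ) (hΨ : ∀ y ∈ V, Ψ (Fchar α y) = m y.1 + y.2)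
    (r : ℝ → ℝ)
    (a : ℝ × ℝ → ℝ) (ha : ∀ y ∈ V, a (Fchar α y) = r y.1) :
    ∀ x ∈ U,
      fderiv ℝ Ψ x (1, 0) * fderiv ℝ a x (1, 0)
        + fderiv ℝ Ψ x (0, 1) * fderiv ℝ a x (0, 1) = 0 := by
  subst hFV
  rintro _ ⟨y, hy, rfl⟩
  have hUx : Fchar α '' V ∈ 𝓝 (Fchar α y) := hU.mem_nhds (mem_image_of_mem _ hy)
  have hGd : DifferentiableAt ℝ G (Fchar α y) :=
    (hG.differentiableOn one_ne_zero _ (mem_image_of_mem _ hy)).differentiableAt hUx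
  have hΨd : DifferentiableAt ℝ Ψ (Fchar α y) :=
    (((hm _).differentiableAt.comp _ hGd.fst).add hGd.snd).congr_of_eventuallyEq
      (eventuallyEq_comp_of_leftInvOn hGF hΨ hUx)
  have hA : fderiv ℝ a (Fchar α y) (charDir α y.1) = 0 :=
    fderiv_apply_eq_zero_of_eventually_comp_eq_const (c := r y.1)
      (hasDerivAt_Fchar_vertical α y) rfl
      ((eventually_mk_left_mem_nhds (hV.mem_nhds hy)).mono fun t ht => ha (y.1, t) ht)
  rw [fderiv_eq_dotL_charDir ((hα.differentiable one_ne_zero) y.1) (hα1 y.1) (hV.mem_nhds hy)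
    hGF hGd (hm y.1) hΨ hΨd]
  rw [ContinuousLinearMap.apply_eq_fst_smul_add_snd_smul] at hA
  simpa [charDir] using hA

/-- **Functions constant along characteristics are annihilated by `∇Ψ`.**
If `F = Fchar α` restricted to an open set `V` is a `C¹` diffeomorphism onto an open set
`U` (with `C¹` inverse `G`), `m' = α`, `Ψ` is defined on `U` by `Ψ(F(y₁, y₂)) = m(y₁) + y₂`,
`r` is `C¹`, and `a` is defined on `U` by `a(F(y₁, y₂)) = r(y₁)` (so `a` is constant along
the characteristic curves `t ↦ F(y₁, t)`), then `⟨∇Ψ(x), ∇a(x)⟩ = 0` for every `x ∈ U`. -/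
theorem transport_orthogonality
    (α : ℝ → ℝ) (hα : ContDiff ℝ 1 α) (hα1 : ∀ s, |α s| < 1)
    (V U : Set (ℝ × ℝ)) (hV : IsOpen V) (hU : IsOpen U)
    (hFV : Fchar α '' V = U) (hFinj : InjOn (Fchar α) V)
    (G : ℝ × ℝ → ℝ × ℝ) (hG : ContDiffOn ℝ 1 G U)
    (hGF : ∀ y ∈ V, G (Fchar α y) = y)
    (m : ℝ → ℝ) (hm : ∀ s, HasDerivAt m (α s) s)
    (Ψ : ℝ × ℝ → ℝ) (hΨ : ∀ y ∈ V, Ψ (Fchar α y) = m y.1 + y.2)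
    (r : ℝ → ℝ) (hr : ContDiff ℝ 1 r)
    (a : ℝ × ℝ → ℝ) (ha : ∀ y ∈ V, a (Fchar α y) = r y.1) :
    ∀ x ∈ U,
      fderiv ℝ Ψ x (1, 0) * fderiv ℝ a x (1, 0)
        + fderiv ℝ Ψ x (0, 1) * fderiv ℝ a x (0, 1) = 0 :=
  transport_orthogonality_general α hα hα1 V U hV hU hFV G hG hGF m hm Ψ hΨ r a ha
end

section
/- Let K > 0, let α : ℝ → ℝ be of class C² with |α(s)| < 1 for all s, α(0) = 0, and 1 + α'(0) x₂ > 0 for all x₂ ∈ [0, K]; set β = √(1 − α²). Then for every continuous function g : ℝ² → ℂ, lim_{h → 0⁺} (1/(2h)) ∫₀^K ( ∫_{−h + (α(−h)/β(−h)) x₂}^{h + (α(h)/β(h)) x₂} g(x₁, x₂) dx₁ ) dx₂ = ∫₀^K (1 + α'(0) x₂) · g(0, x₂) dx₂. -/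
/-!
Write `a = α / β`, so that `a 0 = 0` and `a' 0 = α' 0` (because `β 0 = 1`, `β' 0 = 0`).
For fixed `x₂` the inner integral is an average of `g (·, x₂)` over an interval shrinking to `0`
whose length is `2h + (a h - a (-h)) x₂`; divided by `2h` it therefore tends to
`(1 + α' 0 x₂) g (0, x₂)`, by the symmetric difference quotient of `a` at `0`.
Since `|a (±h)| = O(h)`, for small `h` the strip lies in a fixed compact set on which `g` is
bounded, and the averages are bounded uniformly in `x₂`; dominated convergence in `x₂` concludes.
-/

open Set MeasureTheory intervalIntegral Filter Topology Asymptotics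

theorem HasDerivAt.tendsto_symmetric_slope {a : ℝ → ℝ} {d x : ℝ} (h : HasDerivAt a d x) :
    Tendsto (fun t => (a (x + t) - a (x - t)) / (2 * t)) (𝓝[≠] 0) (𝓝 d) := by
  have hr : HasDerivAt (fun t => a (x + t)) d 0 := .comp_const_add x 0 (by simpa using h)
  have hl : HasDerivAt (fun t => a (x - t)) (-d) 0 := .comp_const_sub x 0 (by simpa using h)
  have := ((hr.sub hl).tendsto_slope_zero).div_const 2
  rw [sub_neg_eq_add, add_self_div_two] at this
  refine this.congr fun t => ?_
  simp only [Pi.sub_apply, zero_add, add_zero, sub_zero, sub_self, smul_eq_mul]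
  ring

theorem HasDerivAt.exists_pos_eventually_abs_le {a : ℝ → ℝ} {d : ℝ} (h : HasDerivAt a d 0)
    (ha0 : a 0 = 0) : ∃ M > 0, ∀ᶠ t in 𝓝 0, |a t| ≤ M * |t| ∧ |a (-t)| ≤ M * |t| := by
  obtain ⟨M, hM, hbound⟩ := h.isBigO_sub.exists_pos
  have hle : ∀ᶠ t in 𝓝 (0 : ℝ), |a t| ≤ M * |t| := by
    simpa [ha0] using hbound.bound
  refine ⟨M, hM, hle.and ?_⟩
  simpa using (continuous_neg.tendsto' 0 0 neg_zero).eventually hle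

theorem HasDerivAt.div_sqrt_one_sub_sq {α : ℝ → ℝ} {d : ℝ} (h : HasDerivAt α d 0)
    (h0 : α 0 = 0) : HasDerivAt (fun t => α t / √(1 - α t ^ 2)) d 0 := by
  have hβ : HasDerivAt (fun t => √(1 - α t ^ 2)) 0 0 := by
    simpa [h0] using ((h.pow 2).const_sub 1).sqrt (by simp [h0])
  simpa [h0] using h.fun_div hβ (by simp [h0])

theorem abs_add_mul_le {s b x h M L : ℝ} (hs : |s| ≤ h) (hb : |b| ≤ M * h) (hx : |x| ≤ L) :
    |s + b * x| ≤ h * (1 + M * L) := by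
  have : |b| * |x| ≤ M * h * L := mul_le_mul hb hx (abs_nonneg x) ((abs_nonneg b).trans hb)
  calc |s + b * x| ≤ |s| + |b| * |x| := (abs_add_le _ _).trans_eq (by rw [abs_mul])
    _ ≤ h * (1 + M * L) := by linarith

section

variable {E : Type*} [NormedAddCommGroup E] [NormedSpace ℝ E]

theorem tendsto_smul_intervalIntegral_of_tendsto [CompleteSpace E] {ι : Type*} {l : Filter ι}
    {φ : ℝ → E} (hφ : Continuous φ) {x₀ m : ℝ} {u v k : ι → ℝ}
    (hu : Tendsto u l (𝓝 x₀)) (hv : Tendsto v l (𝓝 x₀))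
    (hk : Tendsto (fun i => k i * (v i - u i)) l (𝓝 m)) :
    Tendsto (fun i => k i • ∫ t in u i..v i, φ t) l (𝓝 (m • φ x₀)) := by
  have hlin : (fun i => (∫ t in u i..v i, φ t) - (v i - u i) • φ x₀) =o[l] (v - u) :=
    integral_sub_linear_isLittleO_of_tendsto_ae (hφ.stronglyMeasurableAtFilter _ _)
      ((hφ.tendsto x₀).mono_left inf_le_left) hu hv
  have herr : Tendsto (fun i => k i • ((∫ t in u i..v i, φ t) - (v i - u i) • φ x₀)) l (𝓝 0) :=
    (isLittleO_one_iff ℝ).1 <|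
      ((isBigO_refl k l).smul_isLittleO hlin).trans_isBigO (hk.isBigO_one ℝ)
  simpa only [smul_sub, ← mul_smul, sub_add_cancel, zero_add] using
    herr.add (hk.smul_const (φ x₀))

theorem continuous_parametric_intervalIntegral_of_continuous_bounds {X : Type*}
    [TopologicalSpace X] {f : X → ℝ → E} (hf : Continuous (Function.uncurry f)) {u v : X → ℝ}
    (hu : Continuous u) (hv : Continuous v) :
    Continuous fun x => ∫ t in u x..v x, f x t := by
  have hprim {w : X → ℝ} (hw : Continuous w) : Continuous fun x => ∫ t in (0 : ℝ)..w x, f x t :=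
    continuous_parametric_intervalIntegral_of_continuous hf hw
  refine ((hprim hv).sub (hprim hu)).congr fun x => ?_
  exact integral_interval_sub_left ((hf.uncurry_left x).intervalIntegrable _ _)
    ((hf.uncurry_left x).intervalIntegrable _ _)

theorem norm_intervalIntegral_le_of_abs_le {φ : ℝ → E} {A C u v : ℝ}
    (hφ : ∀ t ∈ Icc (-A) A, ‖φ t‖ ≤ C) (hu : |u| ≤ A) (hv : |v| ≤ A) :
    ‖∫ t in u..v, φ t‖ ≤ C * |v - u| :=
  norm_integral_le_of_norm_le_const fun t ht =>
    hφ t (uIcc_subset_Icc (abs_le.1 hu) (abs_le.1 hv) (uIoc_subset_uIcc ht))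

theorem norm_smul_intervalIntegral_strip_le {φ : ℝ → E} {a : ℝ → ℝ} {h x M L C : ℝ}
    (hh0 : 0 < h) (hh1 : h ≤ 1) (hM : 0 ≤ M) (ha : |a h| ≤ M * h) (ha' : |a (-h)| ≤ M * h)
    (hx : |x| ≤ L) (hφ : ∀ t ∈ Icc (-(1 + M * L)) (1 + M * L), ‖φ t‖ ≤ C) :
    ‖(1 / (2 * h)) • ∫ t in (-h + a (-h) * x)..(h + a h * x), φ t‖ ≤ C * (1 + M * L) := by
  set B := 1 + M * L
  have hB : 0 ≤ B := by have := (abs_nonneg x).trans hx; positivity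
  have hC : 0 ≤ C := (norm_nonneg _).trans (hφ 0 ⟨by linarith, hB⟩)
  have hv := abs_add_mul_le (abs_of_pos hh0).le ha hx
  have hu := abs_add_mul_le ((abs_neg h).trans (abs_of_pos hh0)).le ha' hx
  have hhB : h * B ≤ B := mul_le_of_le_one_left hB hh1
  have hint := norm_intervalIntegral_le_of_abs_le hφ (hu.trans hhB) (hv.trans hhB)
  calc ‖(1 / (2 * h)) • ∫ t in (-h + a (-h) * x)..(h + a h * x), φ t‖
      ≤ (1 / (2 * h)) * (C * (h * B + h * B)) := by
        rw [norm_smul, Real.norm_of_nonneg (by positivity)]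
        gcongr
        exact hint.trans (mul_le_mul_of_nonneg_left ((abs_sub _ _).trans (add_le_add hv hu)) hC)
    _ = C * B := by field_simp; ring

theorem tendsto_strip_average [CompleteSpace E] {K d : ℝ} {a : ℝ → ℝ} (ha0 : a 0 = 0)
    (had : HasDerivAt a d 0) {g : ℝ × ℝ → E} (hg : Continuous g) :
    Tendsto (fun h : ℝ => (1 / (2 * h)) •
        ∫ x₂ in (0 : ℝ)..K, ∫ x₁ in (-h + a (-h) * x₂)..(h + a h * x₂), g (x₁, x₂))
      (𝓝[>] 0) (𝓝 (∫ x₂ in (0 : ℝ)..K, (1 + d * x₂) • g (0, x₂))) := by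
  obtain ⟨M, hM, hMa⟩ := had.exists_pos_eventually_abs_le ha0
  obtain ⟨C, hC⟩ := (isCompact_Icc.prod isCompact_uIcc).exists_bound_of_continuousOn
    (s := Icc (-(1 + M * |K|)) (1 + M * |K|) ×ˢ uIcc 0 K) hg.continuousOn
  refine Tendsto.congr (fun h => integral_smul (1 / (2 * h)) _) ?_
  refine tendsto_integral_filter_of_dominated_convergence (fun _ => C * (1 + M * |K|)) ?_ ?_
    intervalIntegrable_const ?_
  · refine Eventually.of_forall fun h => (Continuous.aestronglyMeasurable ?_).restrict
    exact continuous_const.smul <| continuous_parametric_intervalIntegral_of_continuous_bounds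
      (f := fun x₂ x₁ => g (x₁, x₂)) (hg.comp continuous_swap) (by fun_prop) (by fun_prop)
  · have hsmall : ∀ᶠ h in 𝓝[>] (0 : ℝ), h ∈ Ioc 0 1 ∧ |a h| ≤ M * h ∧ |a (-h)| ≤ M * h := by
      filter_upwards [Ioc_mem_nhdsGT zero_lt_one, nhdsWithin_le_nhds hMa] with h hh hah
      simpa [abs_of_pos hh.1, hh] using hah
    filter_upwards [hsmall] with h ⟨⟨hh0, hh1⟩, hah, hah'⟩
    refine Eventually.of_forall fun x₂ hx₂ => ?_
    have hx : |x₂| ≤ |K| := by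
      simpa only [sub_zero] using abs_sub_left_of_mem_uIcc (uIoc_subset_uIcc hx₂)
    exact norm_smul_intervalIntegral_strip_le hh0 hh1 hM.le hah hah' hx
      fun t ht => hC _ ⟨ht, uIoc_subset_uIcc hx₂⟩
  · refine Eventually.of_forall fun x₂ _ => ?_
    have ha : Tendsto a (𝓝 0) (𝓝 0) := by simpa [ha0] using had.continuousAt.tendsto
    have hneg : Tendsto (fun h : ℝ => -h) (𝓝 0) (𝓝 0) := continuous_neg.tendsto' 0 0 neg_zero
    have hu : Tendsto (fun h => -h + a (-h) * x₂) (𝓝 0) (𝓝 0) := by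
      simpa using hneg.add ((ha.comp hneg).mul_const x₂)
    have hv : Tendsto (fun h => h + a h * x₂) (𝓝 0) (𝓝 0) := by
      simpa using tendsto_id.add (ha.mul_const x₂)
    have hwidth : Tendsto (fun h => 1 / (2 * h) * ((h + a h * x₂) - (-h + a (-h) * x₂)))
        (𝓝[>] 0) (𝓝 (1 + d * x₂)) := by
      refine ((tendsto_const_nhds.add (had.tendsto_symmetric_slope.mul_const x₂)).mono_left
        (nhdsGT_le_nhdsNE 0)).congr' ?_
      filter_upwards [self_mem_nhdsWithin] with h (hh : 0 < h)
      simp only [zero_add, zero_sub]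
      field_simp
      ring
    exact tendsto_smul_intervalIntegral_of_tendsto (φ := fun x₁ => g (x₁, x₂)) (by fun_prop)
      (hu.mono_left nhdsWithin_le_nhds) (hv.mono_left nhdsWithin_le_nhds) hwidth

end

theorem strip_average_limit_general
    (K : ℝ)
    (α : ℝ → ℝ) (hα : ContDiff ℝ 2 α) (hα0 : α 0 = 0)
    (g : ℝ × ℝ → ℂ) (hg : Continuous g) :
    Filter.Tendsto
      (fun h : ℝ =>
        ((1 / (2 * h) : ℝ) : ℂ) *
          ∫ x₂ in (0 : ℝ)..K,
            ∫ x₁ in (-h + (α (-h) / Real.sqrt (1 - α (-h) ^ 2)) * x₂)..(h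
                + (α h / Real.sqrt (1 - α h ^ 2)) * x₂),
              g (x₁, x₂))
      (nhdsWithin 0 (Ioi 0))
      (nhds (∫ x₂ in (0 : ℝ)..K, ((1 + deriv α 0 * x₂ : ℝ) : ℂ) * g (0, x₂))) := by
  have hderiv : HasDerivAt α (deriv α 0) 0 := (hα.differentiable (by norm_num) 0).hasDerivAt
  simpa only [Complex.real_smul] using
    tendsto_strip_average (K := K) (by simp [hα0]) (hderiv.div_sqrt_one_sub_sq hα0) hg

/-- **Averaging over the thin curvilinear strip `Π_h`.**
Let `K > 0`, let `α` be `C²` with `|α| < 1`, `α(0) = 0`, and `1 + α'(0) x₂ > 0` on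
`[0, K]`, and set `β = √(1 - α²)`. For every continuous `g : ℝ² → ℂ`,
`(1/(2h)) ∫₀^K ∫_{-h + (α(-h)/β(-h)) x₂}^{h + (α(h)/β(h)) x₂} g(x₁, x₂) dx₁ dx₂`
converges, as `h → 0⁺`, to `∫₀^K (1 + α'(0) x₂) g(0, x₂) dx₂`. -/
theorem strip_average_limit
    (K : ℝ) (hK : 0 < K)
    (α : ℝ → ℝ) (hα : ContDiff ℝ 2 α) (hα1 : ∀ s, |α s| < 1) (hα0 : α 0 = 0)
    (hpos : ∀ x₂ ∈ Icc (0 : ℝ) K, 0 < 1 + deriv α 0 * x₂)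
    (g : ℝ × ℝ → ℂ) (hg : Continuous g) :
    Filter.Tendsto
      (fun h : ℝ =>
        ((1 / (2 * h) : ℝ) : ℂ) *
          ∫ x₂ in (0 : ℝ)..K,
            ∫ x₁ in (-h + (α (-h) / Real.sqrt (1 - α (-h) ^ 2)) * x₂)..(h
                + (α h / Real.sqrt (1 - α h ^ 2)) * x₂),
              g (x₁, x₂))
      (nhdsWithin 0 (Ioi 0))
      (nhds (∫ x₂ in (0 : ℝ)..K, ((1 + deriv α 0 * x₂ : ℝ) : ℂ) * g (0, x₂))) :=
  strip_average_limit_general K α hα hα0 g hg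
end
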